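/- arXiv:1212.4063 — 2 statements merged into one kernel-verified Lean document; each statement's English description precedes it below -/
import Mathlib

section
/- Let P be a nonzero Poisson prime ideal of B = A[z] and Q = P ∩ A. If δ(A) ⊄ Q then P = QB. -/
/-!
Bracketing with a constant `a ∈ A` acts on `A[z]` as `-δ(a) · d/dz`. If `δ(a) ∉ P`, primality of
`P` therefore makes `P` stable under `d/dz`. Over a ring containing `ℚ`, an ideal of `A[z]` stable
under `d/dz` is extended from its contraction: by induction on the degree, all coefficients of `f`
except the constant one are, up to a nonzero integer factor, coefficients of `f'`, and then the
constant term lies in the ideal as well.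
-/

open Polynomial

/-- A Poisson bracket on a commutative `ℂ`-algebra `B`. -/
structure IsPoissonBracket {B : Type*} [CommRing B] [Algebra ℂ B]
    (br : B → B → B) : Prop where
  add_left : ∀ a b c : B, br (a + b) c = br a c + br b c
  smul_left : ∀ (r : ℂ) (a b : B), br (r • a) b = r • br a b
  antisymm : ∀ a b : B, br a b = - br b a
  jacobi : ∀ a b c : B, br a (br b c) + br b (br c a) + br c (br a b) = 0
  leibniz : ∀ a b c : B, br a (b * c) = br a b * c + b * br a c

/-- The Poisson bracket `{-,-}_δ` on `A[z]`: zero on `A` and `{z,a} = δ a`. -/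
def IsDeltaBracket {A : Type*} [CommRing A] [Algebra ℂ A] (δ : Derivation ℂ A A)
    (br : Polynomial A → Polynomial A → Polynomial A) : Prop :=
  IsPoissonBracket br ∧ (∀ a b : A, br (Polynomial.C a) (Polynomial.C b) = 0) ∧
    (∀ a : A, br Polynomial.X (Polynomial.C a) = Polynomial.C (δ a))

/-- `I` is a Poisson ideal for the bracket `br`. -/
def IsPoissonIdeal {B : Type*} [CommRing B] (br : B → B → B) (I : Ideal B) : Prop :=
  ∀ b : B, ∀ i ∈ I, br b i ∈ I

/-- `I` is a `δ`-ideal. -/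
def IsDeltaIdeal {A : Type*} [CommRing A] [Algebra ℂ A] (δ : Derivation ℂ A A)
    (I : Ideal A) : Prop :=
  ∀ a ∈ I, δ a ∈ I

/-- `P` is a `δ`-prime ideal. -/
def IsDeltaPrime {A : Type*} [CommRing A] [Algebra ℂ A] (δ : Derivation ℂ A A)
    (P : Ideal A) : Prop :=
  P ≠ ⊤ ∧ IsDeltaIdeal δ P ∧
    ∀ I J : Ideal A, IsDeltaIdeal δ I → IsDeltaIdeal δ J → I * J ≤ P → I ≤ P ∨ J ≤ P

theorem isUnit_natCast_of_field (K : Type*) {R : Type*} [Field K] [CharZero K] [CommRing R]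
    [Algebra K R] {n : ℕ} (hn : n ≠ 0) : IsUnit (n : R) := by
  simpa using (isUnit_iff_ne_zero.mpr (Nat.cast_ne_zero.mpr hn) : IsUnit (n : K)).map
    (algebraMap K R)

theorem Ideal.mem_map_C_comap_C_of_derivative_mem (K : Type*) {R : Type*} [Field K] [CharZero K]
    [CommRing R] [Algebra K R] {I : Ideal R[X]} {f : R[X]} (hf : f ∈ I)
    (hf' : derivative f ∈ (I.comap C).map C) : f ∈ (I.comap C).map C := by
  have hle : (I.comap C).map C ≤ I := Ideal.map_le_iff_le_comap.mpr le_rfl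
  have htail : f - C (f.coeff 0) ∈ (I.comap C).map C := by
    rw [Ideal.mem_map_C_iff] at hf' ⊢
    rintro (_ | j)
    · simp
    · have hj := hf' j
      rw [coeff_derivative] at hj
      have hunit : IsUnit ((j : R) + 1) := by
        exact_mod_cast isUnit_natCast_of_field K (Nat.succ_ne_zero j)
      simpa using (Ideal.mul_unit_mem_iff_mem _ hunit).mp hj
  have hconst : C (f.coeff 0) ∈ (I.comap C).map C := by
    refine Ideal.mem_map_of_mem _ ?_
    simpa using I.sub_mem hf (hle htail)
  simpa using Ideal.add_mem _ htail hconst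

theorem Ideal.eq_map_C_comap_C_of_derivative_mem (K : Type*) {R : Type*} [Field K] [CharZero K]
    [CommRing R] [Algebra K R] (I : Ideal R[X])
    (hI : ∀ f ∈ I, derivative f ∈ I) : I = (I.comap C).map C := by
  refine le_antisymm (fun f hf => ?_) (Ideal.map_le_iff_le_comap.mpr le_rfl)
  induction hdeg : f.natDegree using Nat.strong_induction_on generalizing f with
  | _ n ih =>
    refine Ideal.mem_map_C_comap_C_of_derivative_mem K hf ?_
    rcases eq_or_ne n 0 with rfl | hn
    · rw [derivative_of_natDegree_zero hdeg]
      exact Ideal.zero_mem _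
    · exact ih _ (hdeg ▸ natDegree_derivative_lt (hdeg ▸ hn)) _ (hI f hf) rfl

section DeltaBracket

variable {A : Type*} [CommRing A] [Algebra ℂ A] {δ : Derivation ℂ A A}
  {br : A[X] → A[X] → A[X]}

theorem IsPoissonBracket.add_right {B : Type*} [CommRing B] [Algebra ℂ B] {br : B → B → B}
    (hb : IsPoissonBracket br) (a b c : B) : br a (b + c) = br a b + br a c := by
  rw [hb.antisymm, hb.add_left, hb.antisymm b, hb.antisymm c]
  ring

theorem IsDeltaBracket.bracket_C_X_pow (hbr : IsDeltaBracket δ br) (a : A) (n : ℕ) :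
    br (C a) (X ^ n) = -(C (δ a) * derivative (X ^ n : A[X])) := by
  obtain ⟨hb, hCC, hXC⟩ := hbr
  induction n with
  | zero => simpa using hCC a 1
  | succ n ih =>
    rw [pow_succ, hb.leibniz, ih, hb.antisymm, hXC, derivative_mul, derivative_X]
    ring

theorem IsDeltaBracket.bracket_C (hbr : IsDeltaBracket δ br) (a : A) (f : A[X]) :
    br (C a) f = -(C (δ a) * derivative f) := by
  induction f using Polynomial.induction_on' with
  | add p q hp hq => rw [hbr.1.add_right, hp, hq, derivative_add]; ring
  | monomial n b =>
    rw [← C_mul_X_pow_eq_monomial, hbr.1.leibniz, hbr.2.1, hbr.bracket_C_X_pow, derivative_mul,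
      derivative_C]
    ring

theorem IsPoissonIdeal.derivative_mem (hbr : IsDeltaBracket δ br) {P : Ideal A[X]}
    (hP : P.IsPrime) (hPois : IsPoissonIdeal br P) {a : A} (ha : C (δ a) ∉ P) {f : A[X]}
    (hf : f ∈ P) : derivative f ∈ P := by
  have hmul : C (δ a) * derivative f ∈ P := by
    simpa [hbr.bracket_C] using hPois (C a) f hf
  exact (hP.mem_or_mem hmul).resolve_left ha

end DeltaBracket

theorem stmt_4_general {A : Type*} [CommRing A] [Algebra ℂ A]
    (δ : Derivation ℂ A A)
    (br : Polynomial A → Polynomial A → Polynomial A) (hbr : IsDeltaBracket δ br)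
    (P : Ideal (Polynomial A)) (hP : P.IsPrime) (hPois : IsPoissonIdeal br P)
    (hnot : ¬ ∀ a : A, δ a ∈ P.comap (Polynomial.C : A →+* Polynomial A)) :
    P = (P.comap (Polynomial.C : A →+* Polynomial A)).map
      (Polynomial.C : A →+* Polynomial A) := by
  obtain ⟨a, ha⟩ := not_forall.mp hnot
  exact P.eq_map_C_comap_C_of_derivative_mem ℂ fun f hf =>
    hPois.derivative_mem hbr hP ha hf

theorem stmt_4 {A : Type*} [CommRing A] [Algebra ℂ A] [IsDomain A] [IsNoetherianRing A]
    (δ : Derivation ℂ A A) (hδ : δ ≠ 0)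
    (br : Polynomial A → Polynomial A → Polynomial A) (hbr : IsDeltaBracket δ br)
    (P : Ideal (Polynomial A)) (hP : P.IsPrime) (hPois : IsPoissonIdeal br P) (hP0 : P ≠ ⊥)
    (hnot : ¬ ∀ a : A, δ a ∈ P.comap (Polynomial.C : A →+* Polynomial A)) :
    P = (P.comap (Polynomial.C : A →+* Polynomial A)).map
      (Polynomial.C : A →+* Polynomial A) :=
  stmt_4_general δ br hbr P hP hPois hnot
end

section
/- The ideal JB generated by J = δ(A)A in B = A[z] equals the ideal of B generated by all brackets {b, b'} with b, b' ∈ B, and JB is contained in every residually null Poisson ideal of B. -/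
open Polynomial

/-!
The bracket is a derivation in each argument, and a derivation of `A[z]` lands in an ideal as
soon as the generators `a ∈ A` and `z` do. The brackets of generators, `{z, a} = δ a`,
`{a, z} = -δ a`, `{a, b} = 0` and `{z, z} = 0`, all lie in `JB`; conversely each generator `δ a`
of `J` is the bracket `{z, a}`. Residually null ideals contain every bracket, hence `JB`.
-/

theorem Polynomial.mem_of_leibniz {R : Type*} [CommRing R] {I : Ideal R[X]} (D : R[X] → R[X])
    (map_add : ∀ p q, D (p + q) = D p + D q) (map_mul : ∀ p q, D (p * q) = D p * q + p * D q)
    (map_C : ∀ a, D (C a) ∈ I) (map_X : D X ∈ I) (p : R[X]) : D p ∈ I := by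
  induction p using Polynomial.induction_on with
  | C a => exact map_C a
  | add p q hp hq => rw [map_add]; exact add_mem hp hq
  | monomial n a hn =>
    rw [pow_succ, ← mul_assoc, map_mul]
    exact add_mem (I.mul_mem_right _ hn) (I.mul_mem_left _ map_X)

namespace IsPoissonBracket

variable {B : Type*} [CommRing B] [Algebra ℂ B] {br : B → B → B}

theorem add_right_s9 (h : IsPoissonBracket br) (a b c : B) : br a (b + c) = br a b + br a c := by
  rw [h.antisymm, h.add_left, neg_add, ← h.antisymm, ← h.antisymm]

theorem leibniz_left (h : IsPoissonBracket br) (a b c : B) :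
    br (a * b) c = br a c * b + a * br b c := by
  rw [h.antisymm, h.leibniz, neg_add, h.antisymm c a, h.antisymm c b]
  ring

theorem self_eq_zero (h : IsPoissonBracket br) (a : B) : br a a = 0 := by
  have two_smul_eq : (2 : ℂ) • br a a = 0 := by
    rw [two_smul]
    nth_rewrite 1 [h.antisymm]
    exact neg_add_cancel _
  exact (smul_eq_zero.mp two_smul_eq).resolve_left two_ne_zero

end IsPoissonBracket

namespace IsDeltaBracket

variable {A : Type*} [CommRing A] [Algebra ℂ A] {δ : Derivation ℂ A A}
  {br : A[X] → A[X] → A[X]}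

theorem bracket_mem_map_span_range (hbr : IsDeltaBracket δ br) (p q : A[X]) :
    br p q ∈ (Ideal.span (Set.range δ)).map (C : A →+* A[X]) := by
  obtain ⟨hpb, hCC, hXC⟩ := hbr
  set JB : Ideal A[X] := (Ideal.span (Set.range δ)).map C
  have C_δ_mem (a : A) : C (δ a) ∈ JB := Ideal.mem_map_of_mem _ (Ideal.subset_span ⟨a, rfl⟩)
  have mem_right (r : A[X]) (hr_C : ∀ a, br r (C a) ∈ JB) (hr_X : br r X ∈ JB) :
      ∀ q, br r q ∈ JB :=
    mem_of_leibniz (br r) (hpb.add_right_s9 r) (hpb.leibniz r) hr_C hr_X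
  have C_mem (a : A) : ∀ q, br (C a) q ∈ JB := by
    refine mem_right _ (fun b => ?_) ?_
    · rw [hCC]
      exact zero_mem _
    · rw [hpb.antisymm, hXC]
      exact neg_mem (C_δ_mem a)
  have X_mem : ∀ q, br X q ∈ JB := by
    refine mem_right _ (fun a => ?_) ?_
    · rw [hXC]
      exact C_δ_mem a
    · rw [hpb.self_eq_zero]
      exact zero_mem _
  exact mem_of_leibniz (br · q) (fun p p' => hpb.add_left p p' q)
    (fun p p' => hpb.leibniz_left p p' q) (fun a => C_mem a q) (X_mem q) p

theorem map_span_range_eq_span_brackets (hbr : IsDeltaBracket δ br) :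
    (Ideal.span (Set.range δ)).map (C : A →+* A[X]) = Ideal.span {x | ∃ p q, br p q = x} := by
  refine le_antisymm ?_ (Ideal.span_le.mpr ?_)
  · rw [Ideal.map_span]
    refine Ideal.span_le.mpr ?_
    rintro _ ⟨_, ⟨a, rfl⟩, rfl⟩
    exact Ideal.subset_span ⟨X, C a, hbr.2.2 a⟩
  · rintro _ ⟨p, q, rfl⟩
    exact hbr.bracket_mem_map_span_range p q

end IsDeltaBracket

theorem stmt_9_general {A : Type*} [CommRing A] [Algebra ℂ A]
    (δ : Derivation ℂ A A)
    (br : Polynomial A → Polynomial A → Polynomial A) (hbr : IsDeltaBracket δ br) :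
    (Ideal.span (Set.range (⇑δ))).map (Polynomial.C : A →+* Polynomial A) =
        Ideal.span {x : Polynomial A | ∃ p q : Polynomial A, br p q = x} ∧
      ∀ I : Ideal (Polynomial A), IsPoissonIdeal br I →
        (∀ p q : Polynomial A, br p q ∈ I) →
        (Ideal.span (Set.range (⇑δ))).map (Polynomial.C : A →+* Polynomial A) ≤ I := by
  have h := hbr.map_span_range_eq_span_brackets
  refine ⟨h, fun I _ h_null => h ▸ Ideal.span_le.mpr ?_⟩
  rintro _ ⟨p, q, rfl⟩
  exact h_null p q

theorem stmt_9 {A : Type*} [CommRing A] [Algebra ℂ A] [IsDomain A]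
    (δ : Derivation ℂ A A) (hδ : δ ≠ 0)
    (br : Polynomial A → Polynomial A → Polynomial A) (hbr : IsDeltaBracket δ br) :
    (Ideal.span (Set.range (⇑δ))).map (Polynomial.C : A →+* Polynomial A) =
        Ideal.span {x : Polynomial A | ∃ p q : Polynomial A, br p q = x} ∧
      ∀ I : Ideal (Polynomial A), IsPoissonIdeal br I →
        (∀ p q : Polynomial A, br p q ∈ I) →
        (Ideal.span (Set.range (⇑δ))).map (Polynomial.C : A →+* Polynomial A) ≤ I :=
  stmt_9_general δ br hbr
end
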